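/- arXiv:2008.13535 — 3 statements merged into one kernel-verified Lean document; each statement's English description precedes it below -/
import Mathlib

section
/- For the cross-layer recursion x_{l+1} = x_0 ⊙ (W_l x_l + b_l) + x_l on ℝ^d, each coordinate of x_l is a polynomial of total degree at most l+1 in the coordinates of x_0. -/
open MvPolynomial

/-- For the cross-layer recursion `x_{i+1} = x_0 ⊙ (W_i x_i + b_i) + x_i` on `ℝ^d`,
each coordinate of `x_l`, viewed as a polynomial in the coordinates of `x_0`,
has total degree at most `l + 1`. -/
theorem crossnet_total_degree_le
    (d l : ℕ) (W : ℕ → Matrix (Fin d) (Fin d) ℝ) (b : ℕ → Fin d → ℝ)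
    (P : ℕ → Fin d → MvPolynomial (Fin d) ℝ)
    (h0 : ∀ j, P 0 j = X j)
    (hrec : ∀ i j, P (i + 1) j =
      X j * ((∑ k, C (W i j k) * P i k) + C (b i j)) + P i j) :
    ∀ j, (P l j).totalDegree ≤ l + 1 := by
  induction l with
  | zero =>
    intro j
    rw [h0 j]
    simp [totalDegree_X]
  | succ i ih =>
    intro j
    rw [hrec i j]
    refine le_trans (totalDegree_add _ _) (max_le ?_ ((ih j).trans (by omega)))
    refine le_trans (totalDegree_mul _ _) ?_
    have h1 : (X j : MvPolynomial (Fin d) ℝ).totalDegree ≤ 1 := (totalDegree_X j).le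
    have h2 : ((∑ k, C (W i j k) * P i k) + C (b i j)).totalDegree ≤ i + 1 := by
      refine le_trans (totalDegree_add _ _) (max_le ?_ ?_)
      · refine le_trans (totalDegree_finset_sum _ _) ?_
        refine Finset.sup_le fun k _ => ?_
        refine le_trans (totalDegree_mul _ _) ?_
        simpa using ih k
      · simp
    omega
end

section
/- Let g(I, J; x, W) = x_{i_1} ⊙ (W^{(j_1)}_{i_1,i_2} x_{i_2} ⊙ (... ⊙ (W^{(j_{p-1})}_{i_{p-1},i_p} x_{i_p}))). Then for the feature-wise cross network x^{l} defined blockwise by x_i^{l} = x_i ⊙ Σ_q W^{(l)}_{i,q} x_q^{l-1} + x_i^{l-1} with x^0 = x, the i-th block satisfies x_i^l = Σ_{p=2}^{l+1} Σ_{I ∈ S_p^i} Σ_{J ∈ C_l^{p-1}} g(I, J; x, W) + x_i, where S_p^i is the set of p-tuples in {1,...,c}^p with first entry i, and C_l^{p-1} is the set of strictly decreasing (p-1)-tuples in {1,...,l}. -/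
/-!
Unrolling the recursion writes `x^l_i` as a sum of products
`x_{i₁} ⊙ W^{(j₁)}_{i₁,i₂}(x_{i₂} ⊙ ⋯ W^{(j_m)}_{i_m,i_{m+1}} x_{i_{m+1}})` with `i₁ = i` and
`l ≥ j₁ > ⋯ > j_m ≥ 1`. Grouped by `m` these are `crossPathSum x W m l i`, and the recursion at
layer `l + 1` holds for each group separately: a strictly decreasing tuple in `{1, …, l + 1}`
either avoids `l + 1`, giving a term of `x^l_i`, or starts with it, giving
`x_i ⊙ W^{(l+1)}_{i,q}` applied to a term of `x^l_q`.
-/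

open scoped Classical

/-- `g(I, J; x, W)` for `I = i :: rest` and `J` the list of layer indices:
`g = x_{i₁} ⊙ (W^{(j₁)}_{i₁,i₂} x_{i₂} ⊙ (… ⊙ (W^{(j_{p-1})}_{i_{p-1},i_p} x_{i_p})))`. -/
def gcross {c : ℕ} {e : Fin c → ℕ} (x : ∀ i, Fin (e i) → ℝ)
    (W : ℕ → ∀ a b : Fin c, Matrix (Fin (e a)) (Fin (e b)) ℝ) :
    (i : Fin c) → List (Fin c) → List ℕ → (Fin (e i) → ℝ)
  | i, [], _ => x i
  | i, i' :: rest, j :: js => x i * (W j i i').mulVec (gcross x W i' rest js)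
  | _, _ :: _, [] => 0

open Finset Matrix

section StrictAnti

variable {M : Type*} [AddCommMonoid M] {m l : ℕ}

lemma sum_strictAnti_head_ne_last (f : (Fin (m + 1) → Fin (l + 1)) → M) :
    ∑ J ∈ univ.filter (fun J : Fin (m + 1) → Fin (l + 1) => StrictAnti J ∧ J 0 ≠ Fin.last l), f J
      = ∑ J ∈ univ.filter (fun J : Fin (m + 1) → Fin l => StrictAnti J),
          f (Fin.castSucc ∘ J) := by
  have ne_last {J : Fin (m + 1) → Fin (l + 1)} (hJ : StrictAnti J ∧ J 0 ≠ Fin.last l) (a) :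
      J a ≠ Fin.last l :=
    ((hJ.1.antitone (Fin.zero_le a)).trans_lt (Fin.lt_last_iff_ne_last.2 hJ.2)).ne
  refine sum_bij' (fun J hJ a => (J a).castPred (ne_last (mem_filter.1 hJ).2 a))
    (fun J _ => Fin.castSucc ∘ J) ?_ ?_ ?_ ?_ (fun _ _ => rfl)
  · intro J hJ
    simp only [mem_filter, mem_univ, true_and] at hJ ⊢
    exact fun a b hab => Fin.castPred_lt_castPred_iff.2 (hJ.1 hab)
  · intro J hJ
    simp only [mem_filter, mem_univ, true_and] at hJ ⊢
    exact ⟨Fin.strictMono_castSucc.comp_strictAnti hJ, (Fin.castSucc_lt_last _).ne⟩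
  · intro J _
    funext a
    simp
  · intro J _
    funext a
    simp

lemma sum_strictAnti_head_eq_last (f : (Fin (m + 1) → Fin (l + 1)) → M) :
    ∑ J ∈ univ.filter (fun J : Fin (m + 1) → Fin (l + 1) => StrictAnti J ∧ J 0 = Fin.last l), f J
      = ∑ J ∈ univ.filter (fun J : Fin m → Fin l => StrictAnti J),
          f (Fin.cons (Fin.last l) (Fin.castSucc ∘ J)) := by
  have ne_last {J : Fin (m + 1) → Fin (l + 1)} (hJ : StrictAnti J) (a : Fin m) :
      J a.succ ≠ Fin.last l :=
    ((hJ (Fin.succ_pos a)).trans_le (Fin.le_last _)).ne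
  have eq_cons {J : Fin (m + 1) → Fin (l + 1)} (hJ : StrictAnti J ∧ J 0 = Fin.last l) :
      Fin.cons (Fin.last l) (Fin.castSucc ∘ fun a => (J a.succ).castPred (ne_last hJ.1 a)) = J := by
    funext a
    cases a using Fin.cases <;> simp [hJ.2]
  refine sum_bij' (fun J hJ a => (J a.succ).castPred (ne_last (mem_filter.1 hJ).2.1 a))
    (fun J _ => Fin.cons (Fin.last l) (Fin.castSucc ∘ J)) ?_ ?_ ?_ ?_ ?_
  · intro J hJ
    simp only [mem_filter, mem_univ, true_and] at hJ ⊢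
    exact fun a b hab => Fin.castPred_lt_castPred_iff.2 (hJ.1 (Fin.succ_lt_succ_iff.2 hab))
  · intro J hJ
    simp only [mem_filter, mem_univ, true_and] at hJ ⊢
    exact ⟨(Fin.liftFun_cons (· > ·)).2
      ⟨fun _ => Fin.castSucc_lt_last _, Fin.strictMono_castSucc.comp_strictAnti hJ⟩, rfl⟩
  · intro J hJ
    exact eq_cons (mem_filter.1 hJ).2
  · intro J _
    funext a
    simp
  · intro J hJ
    rw [eq_cons (mem_filter.1 hJ).2]

lemma sum_strictAnti_fin_succ (f : (Fin (m + 1) → Fin (l + 1)) → M) :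
    ∑ J ∈ univ.filter (fun J : Fin (m + 1) → Fin (l + 1) => StrictAnti J), f J
      = ∑ J ∈ univ.filter (fun J : Fin (m + 1) → Fin l => StrictAnti J), f (Fin.castSucc ∘ J)
        + ∑ J ∈ univ.filter (fun J : Fin m → Fin l => StrictAnti J),
            f (Fin.cons (Fin.last l) (Fin.castSucc ∘ J)) := by
  rw [← sum_filter_not_add_sum_filter _ (fun J => J 0 = Fin.last l), filter_filter,
    filter_filter, ← sum_strictAnti_head_ne_last, ← sum_strictAnti_head_eq_last]

end StrictAnti

section CrossNetwork

variable {c : ℕ} {e : Fin c → ℕ} (x : ∀ i, Fin (e i) → ℝ)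
  (W : ℕ → ∀ a b : Fin c, Matrix (Fin (e a)) (Fin (e b)) ℝ)

def crossPathSum (m l : ℕ) (i : Fin c) : Fin (e i) → ℝ :=
  ∑ rest : Fin m → Fin c, ∑ J ∈ univ.filter (fun J : Fin m → Fin l => StrictAnti J),
    gcross x W i (List.ofFn rest) (List.ofFn fun a => (J a : ℕ) + 1)

def crossExpansion (l : ℕ) (i : Fin c) : Fin (e i) → ℝ :=
  ∑ m ∈ range (l + 1), crossPathSum x W m l i

variable {x W}

lemma crossPathSum_zero (l : ℕ) (i : Fin c) : crossPathSum x W 0 l i = x i := by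
  simp [crossPathSum, Subsingleton.strictAnti, gcross]

lemma crossPathSum_of_lt {m l : ℕ} (h : l < m) (i : Fin c) : crossPathSum x W m l i = 0 := by
  have : univ.filter (fun J : Fin m → Fin l => StrictAnti J) = ∅ :=
    filter_false_of_mem fun J _ hJ => (Fin.le_of_injective J hJ.injective).not_gt h
  simp [crossPathSum, this]

lemma crossPathSum_succ_succ (m l : ℕ) (i : Fin c) :
    crossPathSum x W (m + 1) (l + 1) i
      = crossPathSum x W (m + 1) l i
        + x i * ∑ q, W (l + 1) i q *ᵥ crossPathSum x W m l q := by
  have split_layers (rest : Fin (m + 1) → Fin c) := sum_strictAnti_fin_succ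
    (fun J : Fin (m + 1) → Fin (l + 1) =>
      gcross x W i (List.ofFn rest) (List.ofFn fun a => (J a : ℕ) + 1))
  simp only [crossPathSum, split_layers, sum_add_distrib, Function.comp_apply, Fin.val_castSucc]
  congr 1
  rw [← (Fin.consEquiv fun _ => Fin c).sum_comp, Fintype.sum_prod_type]
  simp [List.ofFn_succ, gcross, mulVec_sum, mul_sum]

lemma crossExpansion_zero (i : Fin c) : crossExpansion x W 0 i = x i := by
  simp [crossExpansion, crossPathSum_zero]

lemma crossExpansion_succ (l : ℕ) (i : Fin c) :
    crossExpansion x W (l + 1) i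
      = x i * ∑ q, W (l + 1) i q *ᵥ crossExpansion x W l q + crossExpansion x W l i := by
  have shift :
      crossExpansion x W l i = ∑ m ∈ range (l + 1), crossPathSum x W (m + 1) l i + x i := by
    rw [sum_range_succ, crossPathSum_of_lt (Nat.lt_succ_self l), add_zero, crossExpansion,
      sum_range_succ', crossPathSum_zero]
  rw [shift, crossExpansion, sum_range_succ', crossPathSum_zero]
  simp only [crossPathSum_succ_succ, sum_add_distrib, crossExpansion, mulVec_sum, ← mul_sum]
  rw [sum_comm]
  abel

lemma crossExpansion_eq (l : ℕ) (i : Fin c) :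
    crossExpansion x W l i = ∑ m ∈ Icc 1 l, crossPathSum x W m l i + x i := by
  rw [crossExpansion, sum_range_succ', crossPathSum_zero, ← Ico_add_one_right_eq_Icc,
    sum_Ico_eq_sum_range]
  simp only [Nat.add_sub_cancel, add_comm 1]

end CrossNetwork

/-- Feature-wise expansion of the cross network: with
`x_i^j = x_i ⊙ (Σ_q W^{(j)}_{i,q} x_q^{j-1}) + x_i^{j-1}` and `x^0 = x`, the `i`-th
block of the `l`-th layer equals
`Σ_{p=2}^{l+1} Σ_{I ∈ S_p^i} Σ_{J ∈ C_l^{p-1}} g(I, J; x, W) + x_i`,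
where `S_p^i` are the `p`-tuples in `{1,…,c}^p` with first entry `i` (the tuple being
`i` followed by `rest`), and `C_l^{p-1}` are strictly decreasing `(p-1)`-tuples in
`{1,…,l}` (encoded via `Fin l`, layer index `J a + 1`). -/
theorem featurewise_cross_expansion
    (c l : ℕ) (e : Fin c → ℕ) (x : ∀ i, Fin (e i) → ℝ)
    (W : ℕ → ∀ a b : Fin c, Matrix (Fin (e a)) (Fin (e b)) ℝ)
    (xs : ℕ → ∀ i, Fin (e i) → ℝ)
    (h0 : ∀ i, xs 0 i = x i)
    (hrec : ∀ j, 1 ≤ j → j ≤ l → ∀ i,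
      xs j i = x i * (∑ q, (W j i q).mulVec (xs (j - 1) q)) + xs (j - 1) i) :
    ∀ i, xs l i
      = (∑ m ∈ Finset.Icc 1 l,
          ∑ rest : Fin m → Fin c,
            ∑ J ∈ Finset.univ.filter (fun J : Fin m → Fin l => StrictAnti J),
              gcross x W i (List.ofFn rest) (List.ofFn fun a => (J a : ℕ) + 1))
        + x i := by
  have layer_eq : ∀ j ≤ l, ∀ i, xs j i = crossExpansion x W j i := by
    intro j hj
    induction j with
    | zero => simpa only [crossExpansion_zero] using h0
    | succ j ih =>
      intro i
      rw [hrec (j + 1) j.succ_pos hj i, Nat.add_sub_cancel, crossExpansion_succ]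
      simp only [ih (Nat.le_of_succ_le hj)]
  intro i
  rw [layer_eq l le_rfl i, crossExpansion_eq]
  rfl
end

section
/- For the bitwise cross network with output f_l(x) = 1^T x^l, where x^i = x ⊙ (W^{(i-1)} x^{i-1}) + x^{i-1} and x^1 = x, the coefficient of the monomial x_1^{α_1}···x_d^{α_d} with |α| = p ≥ 2 in f_l(x) equals Σ_{j ∈ C_l^{p-1}} Σ_{i ∈ P_α} ∏_{k=1}^{p-1} w^{(j_k)}_{i_k, i_{k+1}}, where P_α is the set of all permutations of the multiset containing index t with multiplicity α_t, and C_l^{p-1} is the set of strictly decreasing (p-1)-tuples in {1,...,l}; the coefficient of each degree-1 monomial x_t is 1, and monomials of degree > l+1 have coefficient 0. -/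
/-!
Writing `x^i = (1 + diag(x) W^{(i)}) x^{i-1}` and expanding, each coordinate `x^i_j` becomes a
sum, over the sets of layers used, of path polynomials
`x_{i_1} w^{(j_1)}_{i_1 i_2} x_{i_2} ⋯ w^{(j_n)}_{i_n i_{n+1}} x_{i_{n+1}}` with `i_1 = j`, the
layers `j_1 > ⋯ > j_n` read from the top down. The recursion closes because a strictly
decreasing tuple in `{1, …, i + 1}` either starts with `i + 1` or avoids it. A path through
`n` layers is a monomial of degree `n + 1` whose exponent counts the visits to each index, so
the coefficient of `x^α` collects exactly the paths through `|α| - 1 ≤ l` layers visiting each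
index `t` exactly `α_t` times.
-/

open MvPolynomial Finset

namespace CrossNetwork

theorem sum_pi_fin_succ {M β : Type*} [AddCommMonoid M] [Fintype β] {n : ℕ}
    (g : (Fin (n + 1) → β) → M) : ∑ I, g I = ∑ b, ∑ I : Fin n → β, g (Fin.cons b I) := by
  rw [← Fintype.sum_prod_type', ← Fintype.sum_equiv (Fin.consEquiv fun _ => β) _ _ (fun _ => rfl)]
  rfl

section Paths

variable {σ R : Type*} [CommSemiring R]

noncomputable def pathExponent {n : ℕ} (I : Fin n → σ) : σ →₀ ℕ :=
  ∑ k, Finsupp.single (I k) 1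

theorem pathExponent_apply [DecidableEq σ] {n : ℕ} (I : Fin n → σ) (t : σ) :
    pathExponent I t = #{k | I k = t} := by
  simp only [pathExponent, Finsupp.finsetSum_apply, Finsupp.single_apply, card_filter]

theorem pathExponent_eq_iff [DecidableEq σ] {n : ℕ} (I : Fin n → σ) (α : σ →₀ ℕ) :
    pathExponent I = α ↔ ∀ t, #{k | I k = t} = α t := by
  simp only [Finsupp.ext_iff, pathExponent_apply]

theorem degree_pathExponent {n : ℕ} (I : Fin n → σ) : (pathExponent I).degree = n := by
  simp [pathExponent, map_sum]

theorem pathExponent_cons {n : ℕ} (j : σ) (I : Fin n → σ) :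
    pathExponent (Fin.cons j I : Fin (n + 1) → σ) = Finsupp.single j 1 + pathExponent I := by
  simp [pathExponent, Fin.sum_univ_succ]

variable (W : ℕ → Matrix σ σ R)

def pathWeight {n : ℕ} (J : Fin n → ℕ) (I : Fin (n + 1) → σ) : R :=
  ∏ k : Fin n, W (J k) (I k.castSucc) (I k.succ)

theorem pathWeight_cons {n : ℕ} (a : ℕ) (J : Fin n → ℕ) (j : σ) (I : Fin (n + 1) → σ) :
    pathWeight W (Fin.cons a J) (Fin.cons j I) = W a j (I 0) * pathWeight W J I := by
  simp [pathWeight, Fin.prod_univ_succ]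

variable [Fintype σ]

noncomputable def crossPath {n : ℕ} (J : Fin n → ℕ) (j : σ) : MvPolynomial σ R :=
  ∑ I : Fin n → σ, monomial (pathExponent (Fin.cons j I)) (pathWeight W J (Fin.cons j I))

theorem crossPath_fin_zero (J : Fin 0 → ℕ) (j : σ) : crossPath W J j = X j := by
  simp [crossPath, pathExponent, pathWeight, X]

theorem crossPath_cons {n : ℕ} (a : ℕ) (J : Fin n → ℕ) (j : σ) :
    crossPath W (Fin.cons a J) j = X j * ∑ k, C (W a j k) * crossPath W J k := by
  simp only [crossPath, mul_sum, C_mul_monomial, pathExponent_cons, pathWeight_cons]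
  rw [sum_pi_fin_succ]
  simp [X, monomial_mul, pathExponent_cons]

theorem sum_coeff_crossPath [DecidableEq σ] {n : ℕ} (J : Fin n → ℕ) (α : σ →₀ ℕ) :
    ∑ j, coeff α (crossPath W J j) = ∑ I with pathExponent I = α, pathWeight W J I := by
  simp only [crossPath, coeff_sum, coeff_monomial, sum_filter]
  rw [sum_pi_fin_succ]

end Paths

section StrictAnti

theorem strictAnti_fin_cons {α : Type*} [Preorder α] {n : ℕ} {a : α} {f : Fin n → α} :
    StrictAnti (Fin.cons a f : Fin (n + 1) → α) ↔ (∀ k, f k < a) ∧ StrictAnti f :=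
  Fin.liftFun_cons (· > ·)

theorem strictAnti_castSucc_comp_iff {m i : ℕ} {J : Fin m → Fin i} :
    StrictAnti (Fin.castSucc ∘ J) ↔ StrictAnti J := by
  simp only [StrictAnti, Function.comp_apply, Fin.castSucc_lt_castSucc_iff]

theorem exists_castSucc_comp_eq {m i : ℕ} {J : Fin m → Fin (i + 1)} (h : ∀ k, J k < Fin.last i) :
    ∃ J' : Fin m → Fin i, Fin.castSucc ∘ J' = J :=
  ⟨fun k => (J k).castPred (h k).ne, funext fun _ => Fin.castSucc_castPred _ _⟩

theorem sum_strictAnti_succ {M : Type*} [AddCommMonoid M] {n i : ℕ}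
    (g : (Fin (n + 1) → Fin (i + 1)) → M) :
    ∑ J with StrictAnti J, g J =
      ∑ J : Fin (n + 1) → Fin i with StrictAnti J, g (Fin.castSucc ∘ J) +
        ∑ J : Fin n → Fin i with StrictAnti J, g (Fin.cons (Fin.last i) (Fin.castSucc ∘ J)) := by
  rw [← sum_filter_not_add_sum_filter _ (fun J => J 0 = Fin.last i), filter_filter,
    filter_filter]
  congr 1
  · symm
    refine sum_nbij (Fin.castSucc ∘ ·) ?_ ?_ ?_ (fun _ _ => rfl)
    · intro J hJ
      simp only [mem_filter, mem_univ, true_and] at hJ ⊢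
      exact ⟨strictAnti_castSucc_comp_iff.2 hJ, (Fin.castSucc_lt_last _).ne⟩
    · exact fun J _ J' _ h => funext fun k => Fin.castSucc_injective _ (congrFun h k)
    · intro J hJ
      simp only [mem_coe, mem_filter, mem_univ, true_and] at hJ
      obtain ⟨J', rfl⟩ := exists_castSucc_comp_eq fun k =>
        (hJ.1.antitone (Fin.zero_le k)).trans_lt (Fin.lt_last_iff_ne_last.2 hJ.2)
      exact ⟨J', by simpa [strictAnti_castSucc_comp_iff] using hJ.1, rfl⟩
  · symm
    refine sum_nbij (fun J => Fin.cons (Fin.last i) (Fin.castSucc ∘ J)) ?_ ?_ ?_ (fun _ _ => rfl)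
    · intro J hJ
      simp only [mem_filter, mem_univ, true_and] at hJ ⊢
      exact ⟨strictAnti_fin_cons.2 ⟨fun k => Fin.castSucc_lt_last _,
        strictAnti_castSucc_comp_iff.2 hJ⟩, rfl⟩
    · intro J _ J' _ h
      exact funext fun k => Fin.castSucc_injective _ (congrFun (Fin.cons_injective2 h).2 k)
    · intro J hJ
      simp only [mem_coe, mem_filter, mem_univ, true_and] at hJ
      obtain ⟨hanti, htop⟩ := hJ
      rw [← Fin.cons_self_tail J, strictAnti_fin_cons, htop] at hanti
      obtain ⟨J', hJ'⟩ := exists_castSucc_comp_eq hanti.1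
      refine ⟨J', by simpa [← hJ', strictAnti_castSucc_comp_iff] using hanti.2, ?_⟩
      simp only [hJ', ← htop, Fin.cons_self_tail]

theorem filter_strictAnti_eq_empty {n i : ℕ} (h : i < n) :
    ({J : Fin n → Fin i | StrictAnti J} : Finset _) = ∅ :=
  filter_eq_empty_iff.2 fun J _ hJ =>
    absurd (Fin.le_of_injective J hJ.injective) (Nat.not_le.2 h)

end StrictAnti

section Layers

variable {σ R : Type*} [Fintype σ] [CommSemiring R] (W : ℕ → Matrix σ σ R)

/-- `J : Fin n → Fin i` encodes the layers `J 0 + 1 > ⋯ > J (n - 1) + 1` in `{1, …, i}`. -/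
noncomputable def layerSum (i n : ℕ) (j : σ) : MvPolynomial σ R :=
  ∑ J : Fin n → Fin i with StrictAnti J, crossPath W (fun k => (J k : ℕ) + 1) j

theorem layerSum_zero_right (i : ℕ) (j : σ) : layerSum W i 0 j = X j := by
  simp [layerSum, crossPath_fin_zero, Subsingleton.strictAnti]

theorem layerSum_eq_zero {i n : ℕ} (h : i < n) (j : σ) : layerSum W i n j = 0 := by
  rw [layerSum, filter_strictAnti_eq_empty h, sum_empty]

theorem layerSum_succ_succ (i n : ℕ) (j : σ) :
    layerSum W (i + 1) (n + 1) j =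
      X j * ∑ k, C (W (i + 1) j k) * layerSum W i n k + layerSum W i (n + 1) j := by
  have hcons (J : Fin n → Fin i) :
      (fun k => ((Fin.cons (Fin.last i) (Fin.castSucc ∘ J) : Fin (n + 1) → Fin (i + 1)) k : ℕ) + 1)
        = Fin.cons (i + 1) (fun k => (J k : ℕ) + 1) := by
    funext k
    cases k using Fin.cases <;> simp
  simp only [layerSum, sum_strictAnti_succ, hcons, crossPath_cons, mul_sum]
  rw [add_comm, sum_comm]
  rfl

theorem sum_range_layerSum_succ (i : ℕ) (j : σ) :
    ∑ n ∈ range (i + 2), layerSum W (i + 1) n j =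
      X j * ∑ k, C (W (i + 1) j k) * ∑ n ∈ range (i + 1), layerSum W i n k +
        ∑ n ∈ range (i + 1), layerSum W i n j := by
  have hshift : ∑ n ∈ range (i + 1), layerSum W i n j =
      ∑ n ∈ range (i + 1), layerSum W i (n + 1) j + X j := by
    rw [sum_range_succ', sum_range_succ (fun n => layerSum W i (n + 1) j),
      layerSum_eq_zero W (Nat.lt_succ_self i), add_zero, layerSum_zero_right]
  rw [sum_range_succ', hshift, layerSum_zero_right]
  simp only [layerSum_succ_succ, sum_add_distrib, mul_sum]
  rw [sum_comm (s := univ)]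
  abel

theorem eq_sum_layerSum {l : ℕ} {P : ℕ → σ → MvPolynomial σ R}
    (h0 : ∀ j, P 0 j = X j)
    (hrec : ∀ i, 1 ≤ i → i ≤ l → ∀ j,
      P i j = X j * (∑ k, C (W i j k) * P (i - 1) k) + P (i - 1) j) :
    ∀ i ≤ l, ∀ j, P i j = ∑ n ∈ range (i + 1), layerSum W i n j := by
  intro i
  induction i with
  | zero => simp [h0, layerSum_zero_right]
  | succ i ih =>
    intro hi j
    rw [hrec (i + 1) (Nat.succ_pos i) hi, Nat.add_sub_cancel, sum_range_layerSum_succ]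
    simp only [ih (Nat.le_of_succ_le hi)]

noncomputable def layerCoeff [DecidableEq σ] (i n : ℕ) (α : σ →₀ ℕ) : R :=
  ∑ J : Fin n → Fin i with StrictAnti J,
    ∑ I with pathExponent I = α, pathWeight W (fun k => (J k : ℕ) + 1) I

theorem sum_coeff_layerSum [DecidableEq σ] (i n : ℕ) (α : σ →₀ ℕ) :
    ∑ j, coeff α (layerSum W i n j) = layerCoeff W i n α := by
  simp only [layerSum, coeff_sum]
  rw [sum_comm]
  simp only [sum_coeff_crossPath, layerCoeff]

theorem layerCoeff_eq_zero_of_degree_ne [DecidableEq σ] {i n : ℕ} {α : σ →₀ ℕ} (h : α.degree ≠ n + 1) :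
    layerCoeff W i n α = 0 :=
  sum_eq_zero fun _ _ => sum_eq_zero fun I hI =>
    absurd ((mem_filter.1 hI).2 ▸ degree_pathExponent I) h

theorem layerCoeff_eq_zero_of_lt [DecidableEq σ] {i n : ℕ} (h : i < n) (α : σ →₀ ℕ) :
    layerCoeff W i n α = 0 := by
  rw [layerCoeff, filter_strictAnti_eq_empty h, sum_empty]

theorem layerCoeff_zero_single [DecidableEq σ] (i : ℕ) (t : σ) :
    layerCoeff W i 0 (Finsupp.single t 1) = 1 := by
  have hpath (I : Fin 1 → σ) : pathExponent I = Finsupp.single t 1 ↔ I = fun _ => t := by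
    simp [pathExponent, Finsupp.single_left_inj one_ne_zero, funext_iff, Fin.forall_fin_one]
  simp [layerCoeff, hpath, pathWeight, Subsingleton.strictAnti, filter_eq']

theorem coeff_eq_sum_layerCoeff [DecidableEq σ] {l : ℕ} {P : ℕ → σ → MvPolynomial σ R}
    (h0 : ∀ j, P 0 j = X j)
    (hrec : ∀ i, 1 ≤ i → i ≤ l → ∀ j,
      P i j = X j * (∑ k, C (W i j k) * P (i - 1) k) + P (i - 1) j) (α : σ →₀ ℕ) :
    coeff α (∑ j, P l j) = ∑ n ∈ range (l + 1), layerCoeff W l n α := by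
  simp only [coeff_sum, eq_sum_layerSum W h0 hrec l le_rfl]
  rw [sum_comm]
  simp only [sum_coeff_layerSum]

end Layers

end CrossNetwork

open CrossNetwork

/-- Bitwise polynomial expansion of the cross network `x^i = x ⊙ (W^{(i)} x^{i-1}) + x^{i-1}`
with `x^0 = x` and output `f_l(x) = 1ᵀ x^l`: the coefficient of a monomial
`x₁^{α₁}⋯x_d^{α_d}` of degree `p = m + 2 ≥ 2` equals
`Σ_{j ∈ C_l^{p-1}} Σ_{i ∈ P_α} ∏_{k=1}^{p-1} w^{(j_k)}_{i_k, i_{k+1}}`,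
where `P_α` is the set of orderings of the multiset having each index `t` with
multiplicity `α_t`, and `C_l^{p-1}` the strictly decreasing `(p-1)`-tuples in
`{1,…,l}` (encoded via `Fin l`, layer index `j + 1`); each degree-1 monomial has
coefficient `1`, and monomials of degree `> l + 1` have coefficient `0`. -/
theorem bitwise_cross_coefficients
    (d l : ℕ) (W : ℕ → Matrix (Fin d) (Fin d) ℝ)
    (P : ℕ → Fin d → MvPolynomial (Fin d) ℝ)
    (h0 : ∀ j, P 0 j = X j)
    (hrec : ∀ i, 1 ≤ i → i ≤ l → ∀ j,
      P i j = X j * (∑ k, C (W i j k) * P (i - 1) k) + P (i - 1) j)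
    (f : MvPolynomial (Fin d) ℝ) (hf : f = ∑ j, P l j) :
    (∀ (m : ℕ) (α : Fin d →₀ ℕ), (α.sum fun _ n => n) = m + 2 →
      f.coeff α
        = ∑ J ∈ Finset.univ.filter (fun J : Fin (m + 1) → Fin l => StrictAnti J),
            ∑ I ∈ Finset.univ.filter
                (fun I : Fin (m + 2) → Fin d =>
                  ∀ t, (Finset.univ.filter fun k => I k = t).card = α t),
              ∏ k : Fin (m + 1), W ((J k : ℕ) + 1) (I k.castSucc) (I k.succ)) ∧
    (∀ t : Fin d, f.coeff (Finsupp.single t 1) = 1) ∧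
    (∀ α : Fin d →₀ ℕ, l + 1 < (α.sum fun _ n => n) → f.coeff α = 0) := by
  subst hf
  refine ⟨fun m α hα => ?_, fun t => ?_, fun α hα => ?_⟩
  · change α.degree = m + 2 at hα
    rw [coeff_eq_sum_layerCoeff W h0 hrec, sum_eq_single (m + 1)]
    · simp only [layerCoeff, pathExponent_eq_iff]
      rfl
    · exact fun n _ hn => layerCoeff_eq_zero_of_degree_ne W (by omega)
    · exact fun hm => layerCoeff_eq_zero_of_lt W (by simpa using hm) α
  · rw [coeff_eq_sum_layerCoeff W h0 hrec, sum_eq_single 0, layerCoeff_zero_single]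
    · exact fun n _ hn => layerCoeff_eq_zero_of_degree_ne W (by simpa using hn)
    · simp
  · change l + 1 < α.degree at hα
    rw [coeff_eq_sum_layerCoeff W h0 hrec]
    exact sum_eq_zero fun n hn =>
      layerCoeff_eq_zero_of_degree_ne W (by have := mem_range.1 hn; omega)
end
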